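/- arXiv:1703.08049 — 2 statements merged into one kernel-verified Lean document; each statement's English description precedes it below -/
import Mathlib

section
/- Let t^0_1 ≤ t^0_2 ≤ ... ≤ t^0_n and t^1_1 ≥ t^1_2 ≥ ... ≥ t^1_n be real sequences. Then the identity permutation minimizes over all permutations σ of {1,...,n} the quantity max_i |t^0_i + t^1_{σ(i)}|; i.e., min over σ of max_i |t^0_i + t^1_{σ(i)}| equals max_i |t^0_i + t^1_i|. -/
/-!
For any permutation `σ` and index `j`, pigeonhole gives an `i ≥ j` with `σ i ≤ j` (and, dually,
an `i ≤ j` with `σ i ≥ j`). With `t0` monotone and `t1` antitone, the first yields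
`t0 j + t1 j ≤ t0 i + t1 (σ i)` and the second the reverse inequality; whichever matches the sign
of `t0 j + t1 j` shows that every term `|t0 j + t1 j|` of the identity pairing is dominated by a
term of the pairing `σ`.
-/

open Finset

variable {ι : Type*} [LinearOrder ι] [Fintype ι]

theorem Equiv.Perm.exists_le_apply_le (σ : Equiv.Perm ι) (j : ι) : ∃ i, j ≤ i ∧ σ i ≤ j := by
  by_contra! h
  have hmaps : (univ.filter (j ≤ ·)).image σ ⊆ univ.filter (j < ·) := by
    intro k hk
    obtain ⟨i, hi, rfl⟩ := mem_image.mp hk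
    exact mem_filter.mpr ⟨mem_univ _, h i (mem_filter.mp hi).2⟩
  have hlt : univ.filter (j < ·) ⊂ univ.filter (j ≤ ·) :=
    ssubset_iff_of_subset (fun k hk => mem_filter.mpr ⟨mem_univ _, (mem_filter.mp hk).2.le⟩)
      |>.mpr ⟨j, by simp, by simp⟩
  exact (card_lt_card (hmaps.trans_ssubset hlt)).ne (card_image_of_injective _ σ.injective)

theorem Equiv.Perm.exists_le_le_apply (σ : Equiv.Perm ι) (j : ι) : ∃ i, i ≤ j ∧ j ≤ σ i :=
  Equiv.Perm.exists_le_apply_le (ι := ιᵒᵈ) σ j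

theorem Equiv.Perm.exists_abs_add_le_abs_add_apply {α : Type*} [AddCommGroup α] [LinearOrder α]
    [IsOrderedAddMonoid α] {f g : ι → α} (hf : Monotone f) (hg : Antitone g)
    (σ : Equiv.Perm ι) (j : ι) : ∃ i, |f j + g j| ≤ |f i + g (σ i)| := by
  rcases le_total 0 (f j + g j) with hj | hj
  · obtain ⟨i, hji, hσi⟩ := σ.exists_le_apply_le j
    refine ⟨i, ?_⟩
    calc |f j + g j| = f j + g j := abs_of_nonneg hj
      _ ≤ f i + g (σ i) := add_le_add (hf hji) (hg hσi)
      _ ≤ |f i + g (σ i)| := le_abs_self _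
  · obtain ⟨i, hij, hσi⟩ := σ.exists_le_le_apply j
    refine ⟨i, ?_⟩
    calc |f j + g j| = -(f j + g j) := abs_of_nonpos hj
      _ ≤ -(f i + g (σ i)) := neg_le_neg (add_le_add (hf hij) (hg hσi))
      _ ≤ |f i + g (σ i)| := neg_le_abs _

theorem stmt_0_general {n : ℕ} [NeZero n] (t0 t1 : Fin n → ℝ)
    (h0 : Monotone t0) (h1 : Antitone t1) :
    (Finset.univ.inf' Finset.univ_nonempty
        (fun σ : Equiv.Perm (Fin n) =>
          Finset.univ.sup' Finset.univ_nonempty (fun i => |t0 i + t1 (σ i)|)))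
      = Finset.univ.sup' Finset.univ_nonempty (fun i => |t0 i + t1 i|) := by
  apply le_antisymm
  · exact inf'_le_of_le (b := 1) _ (mem_univ _) le_rfl
  · refine le_inf' _ _ fun σ _ => sup'_le _ _ fun j _ => ?_
    obtain ⟨i, hi⟩ := σ.exists_abs_add_le_abs_add_apply h0 h1 j
    exact hi.trans (le_sup' (fun i => |t0 i + t1 (σ i)|) (mem_univ i))

theorem stmt_0 {n : ℕ} [NeZero n] (t0 t1 : Fin n → ℝ)
    (h0 : Monotone t0) (h1 : Antitone t1)
    (h0n : ∀ i, 0 ≤ t0 i) (h1n : ∀ i, 0 ≤ t1 i) :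
    (Finset.univ.inf' Finset.univ_nonempty
        (fun σ : Equiv.Perm (Fin n) =>
          Finset.univ.sup' Finset.univ_nonempty (fun i => |t0 i + t1 (σ i)|)))
      = Finset.univ.sup' Finset.univ_nonempty (fun i => |t0 i + t1 i|) :=
  stmt_0_general t0 t1 h0 h1
end

section
/- Let σ minimize over permutations the bottleneck cost max_i (t^0_i + t^1_{σ(i)}), where t^0 is nondecreasing. Let k be an index at which i ↦ t^1_{σ(i)} attains its maximum over {1,...,n}. Then σ ∘ swap(1, k) is also a minimizer. -/
/-! The swap only creates the sums `t0 0 + t1 (σ k)` and `t0 k + t1 (σ 0)`, both dominated by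
`t0 k + t1 (σ k)` since `t0 0 ≤ t0 k` and `t1 (σ k)` is maximal, so the cost does not increase;
minimality of `σ` gives the reverse inequality. -/

open Finset

theorem sup'_add_comp_swap_le {ι α : Type*} [Fintype ι] [DecidableEq ι] [LinearOrder α] [Add α]
    [AddLeftMono α] [AddRightMono α] (H : (univ : Finset ι).Nonempty) (f g : ι → α) {a b : ι}
    (hf : f a ≤ f b) (hg : g a ≤ g b) :
    univ.sup' H (fun i => f i + g (Equiv.swap a b i)) ≤ univ.sup' H (fun i => f i + g i) := by
  have hb : f b + g b ≤ univ.sup' H (fun i => f i + g i) := le_sup' (fun i => f i + g i) (mem_univ b)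
  refine sup'_le H _ fun i _ => ?_
  rw [Equiv.swap_apply_def]
  split_ifs with hia hib
  · subst hia
    exact (add_le_add_left hf _).trans hb
  · subst hib
    exact (add_le_add_right hg _).trans hb
  · exact le_sup' (fun i => f i + g i) (mem_univ i)

theorem stmt_10 {n : ℕ} [NeZero n] (t0 t1 : Fin n → ℝ) (h0 : Monotone t0)
    (σ : Equiv.Perm (Fin n))
    (hσ : ∀ τ : Equiv.Perm (Fin n),
      Finset.univ.sup' Finset.univ_nonempty (fun i => t0 i + t1 (σ i))
        ≤ Finset.univ.sup' Finset.univ_nonempty (fun i => t0 i + t1 (τ i)))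
    (k : Fin n)
    (hk : t1 (σ k) = Finset.univ.sup' Finset.univ_nonempty (fun j => t1 (σ j))) :
    Finset.univ.sup' Finset.univ_nonempty
        (fun i => t0 i + t1 (σ (Equiv.swap (0 : Fin n) k i)))
      = Finset.univ.sup' Finset.univ_nonempty (fun i => t0 i + t1 (σ i)) := by
  have hσk : t1 (σ 0) ≤ t1 (σ k) := hk ▸ le_sup' (fun j => t1 (σ j)) (mem_univ 0)
  exact le_antisymm (sup'_add_comp_swap_le _ t0 (t1 ∘ σ) (h0 k.zero_le) hσk)
    (hσ (σ * Equiv.swap 0 k))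
end
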